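/- arXiv:0906.4609 — 2 statements merged into one kernel-verified Lean document; each statement's English description precedes it below -/
import Mathlib

section
/- If G is a finite König–Egerváry graph, then the critical difference of G equals the independence number minus the matching number: d(G) = α(G) − μ(G). -/
/-!
Fix a maximum independent set `A` and a maximum matching `M`. Since `A` is independent, every
edge of `M` has an endpoint outside `A`, and these endpoints are distinct; as `|Aᶜ| = μ(G)` for a
König–Egerváry graph, they exhaust `Aᶜ`, so `M` matches `Aᶜ` into `A` by an injection `p`.
For any set `S`, `p` sends `S \ A` into `N(S) ∩ A` and `Aᶜ \ N(S)` into `A \ S`, which gives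
`|S| - |N(S)| ≤ |A| - |Aᶜ| = α(G) - μ(G)`. Conversely `N(A) ⊆ Aᶜ`, so `A` itself attains
`α(G) - μ(G)`.
-/

namespace KEPaper

open SimpleGraph

variable {V : Type*}

/-- `nbhd G S` is the set of vertices having a neighbor in `S`. -/
def nbhd (G : SimpleGraph V) (S : Set V) : Set V := {v | ∃ w ∈ S, G.Adj v w}

/-- `S` is an independent set of `G`: no two vertices of `S` are adjacent. -/
def IsIndep (G : SimpleGraph V) (S : Set V) : Prop :=
  S.Pairwise fun u v => ¬ G.Adj u v

/-- The independence number `α(G)`: maximum cardinality of an independent set. -/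
noncomputable def indepNum (G : SimpleGraph V) : ℕ :=
  sSup {n | ∃ S : Set V, IsIndep G S ∧ S.ncard = n}

/-- The matching number `μ(G)`: maximum cardinality of a matching. -/
noncomputable def matchNum (G : SimpleGraph V) : ℕ :=
  sSup {n | ∃ M : Subgraph G, M.IsMatching ∧ M.edgeSet.ncard = n}

/-- `S` is a maximum independent set of `G`. -/
def IsMaxIndep (G : SimpleGraph V) (S : Set V) : Prop :=
  IsIndep G S ∧ S.ncard = indepNum G

/-- The critical difference `d(G) = max {|S| - |N(S)| : S independent}`. -/
noncomputable def critDiff (G : SimpleGraph V) : ℤ :=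
  sSup {d : ℤ | ∃ S : Set V, IsIndep G S ∧ d = (S.ncard : ℤ) - ((nbhd G S).ncard : ℤ)}

/-- `S` is a critical independent set: independent with `|S| - |N(S)| = d(G)`. -/
def IsCritIndep (G : SimpleGraph V) (S : Set V) : Prop :=
  IsIndep G S ∧ (S.ncard : ℤ) - ((nbhd G S).ncard : ℤ) = critDiff G

/-- `core G` is the intersection of all maximum independent sets of `G`. -/
def core (G : SimpleGraph V) : Set V := ⋂ S ∈ {S : Set V | IsMaxIndep G S}, S

/-- `G` is a König–Egerváry graph: `|V(G)| = α(G) + μ(G)`. -/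
def KoenigEgervary (G : SimpleGraph V) : Prop :=
  Nat.card V = indepNum G + matchNum G

/-- `A` is a local maximum independent set of `G`: it is a maximum independent
set of the subgraph of `G` induced by `N[A] = A ∪ N(A)`. -/
def IsLocalMaxIndep (G : SimpleGraph V) (A : Set V) : Prop :=
  IsMaxIndep (G.induce (A ∪ nbhd G A)) {x : ↥(A ∪ nbhd G A) | ↑x ∈ A}

section Lemmas

variable {G : SimpleGraph V}

lemma IsIndep.nbhd_subset_compl {S : Set V} (hS : IsIndep G S) : nbhd G S ⊆ Sᶜ :=
  fun _ ⟨_, hw, hadj⟩ hv => hS hv hw hadj.ne hadj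

lemma isIndep_empty : IsIndep G ∅ := Set.pairwise_empty _

lemma nbhd_empty : nbhd G ∅ = ∅ := by
  simp [nbhd]

section Finite

variable [Finite V]

variable (G) in
lemma exists_isMaxIndep : ∃ A, IsMaxIndep G A :=
  Nat.sSup_mem (s := {n | ∃ S : Set V, IsIndep G S ∧ S.ncard = n})
    ⟨0, ∅, isIndep_empty, Set.ncard_empty V⟩
    ⟨Nat.card V, fun _ ⟨S, _, hS⟩ => hS ▸ Set.ncard_le_card S⟩

variable (G) in
lemma exists_isMatching_ncard_eq_matchNum :
    ∃ M : G.Subgraph, M.IsMatching ∧ M.edgeSet.ncard = matchNum G :=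
  Nat.sSup_mem (s := {n | ∃ M : G.Subgraph, M.IsMatching ∧ M.edgeSet.ncard = n})
    ⟨0, ⊥, fun _ hv => hv.elim, by simp⟩
    ⟨Nat.card (Sym2 V), fun _ ⟨M, _, hM⟩ => hM ▸ Set.ncard_le_card _⟩

variable (G) in
lemma critDiff_set_finite :
    {d : ℤ | ∃ S : Set V, IsIndep G S ∧ d = (S.ncard : ℤ) - ((nbhd G S).ncard : ℤ)}.Finite :=
  (Set.finite_range fun S : Set V => (S.ncard : ℤ) - ((nbhd G S).ncard : ℤ)).subset
    fun _ ⟨S, _, hd⟩ => ⟨S, hd.symm⟩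

lemma IsIndep.ncard_sub_ncard_nbhd_le_critDiff {S : Set V} (hS : IsIndep G S) :
    (S.ncard : ℤ) - ((nbhd G S).ncard : ℤ) ≤ critDiff G :=
  le_csSup (critDiff_set_finite G).bddAbove ⟨S, hS, rfl⟩

variable (G) in
lemma exists_isCritIndep : ∃ S, IsCritIndep G S := by
  have hzero : (0 : ℤ) ∈
      {d : ℤ | ∃ S : Set V, IsIndep G S ∧ d = (S.ncard : ℤ) - ((nbhd G S).ncard : ℤ)} :=
    ⟨∅, isIndep_empty, by simp [nbhd_empty]⟩
  obtain ⟨S, hS, hd⟩ := Set.Nonempty.csSup_mem ⟨0, hzero⟩ (critDiff_set_finite G)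
  exact ⟨S, hS, hd.symm⟩

lemma KoenigEgervary.ncard_compl (hG : KoenigEgervary G) {A : Set V} (hA : IsMaxIndep G A) :
    Aᶜ.ncard = matchNum G := by
  have := Set.ncard_add_ncard_compl A
  rw [hA.2, hG] at this
  omega

end Finite

lemma _root_.SimpleGraph.Subgraph.IsMatching.eq_of_mem_edgeSet {M : G.Subgraph}
    (hM : M.IsMatching) {e₁ e₂ : Sym2 V} (he₁ : e₁ ∈ M.edgeSet) (he₂ : e₂ ∈ M.edgeSet) {v : V}
    (hv₁ : v ∈ e₁) (hv₂ : v ∈ e₂) : e₁ = e₂ := by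
  obtain ⟨w₁, rfl⟩ := Sym2.mem_iff_exists.mp hv₁
  obtain ⟨w₂, rfl⟩ := Sym2.mem_iff_exists.mp hv₂
  rw [hM.eq_of_adj_left (M.mem_edgeSet.mp he₁) (M.mem_edgeSet.mp he₂)]

lemma _root_.SimpleGraph.Subgraph.IsMatching.exists_adj_mem_of_ncard_compl_le [Finite V]
    {M : G.Subgraph} (hM : M.IsMatching) {A : Set V} (hA : IsIndep G A)
    (hcard : Aᶜ.ncard ≤ M.edgeSet.ncard) {v : V} (hv : v ∉ A) : ∃ w ∈ A, M.Adj v w := by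
  have hout : ∀ e ∈ M.edgeSet, ∃ u ∈ e, u ∉ A := by
    rintro ⟨x, y⟩ he
    by_cases hx : x ∈ A
    · exact ⟨y, Sym2.mem_mk_right x y, fun hy => hA hx hy (M.adj_sub he).ne (M.adj_sub he)⟩
    · exact ⟨x, Sym2.mem_mk_left x y, hx⟩
  have : Nonempty V := ⟨v⟩
  choose! f hf_mem hf_out using hout
  have hinj : Set.InjOn f M.edgeSet := fun e₁ he₁ e₂ he₂ h =>
    hM.eq_of_mem_edgeSet he₁ he₂ (hf_mem e₁ he₁) (h ▸ hf_mem e₂ he₂)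
  have himage : f '' M.edgeSet = Aᶜ :=
    Set.eq_of_subset_of_ncard_le (Set.image_subset_iff.mpr hf_out) (hinj.ncard_image ▸ hcard)
  obtain ⟨e, he, hfe⟩ : v ∈ f '' M.edgeSet := himage ▸ hv
  obtain ⟨w, rfl⟩ := Sym2.mem_iff_exists.mp (hfe ▸ hf_mem e he)
  refine ⟨w, by_contra fun hw => ?_, M.mem_edgeSet.mp he⟩
  obtain ⟨e', he', hfe'⟩ : w ∈ f '' M.edgeSet := himage ▸ hw
  have he'_eq : e' = s(v, w) :=
    hM.eq_of_mem_edgeSet he' he (hfe' ▸ hf_mem e' he') (Sym2.mem_mk_right v w)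
  rw [he'_eq, hfe] at hfe'
  exact (M.adj_sub he).ne hfe'

lemma KoenigEgervary.exists_injOn_adj [Finite V] (hG : KoenigEgervary G) {A : Set V}
    (hA : IsMaxIndep G A) :
    ∃ p : V → V, Set.InjOn p Aᶜ ∧ Set.MapsTo p Aᶜ A ∧ ∀ v ∉ A, G.Adj v (p v) := by
  obtain ⟨M, hM, hMcard⟩ := exists_isMatching_ncard_eq_matchNum G
  have hpartner : ∀ v ∉ A, ∃ w ∈ A, M.Adj v w := fun v =>
    hM.exists_adj_mem_of_ncard_compl_le hA.1 (hMcard ▸ (hG.ncard_compl hA).le)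
  choose! p hp_mem hp_adj using hpartner
  exact ⟨p, fun v₁ _ v₂ _ h => hM.eq_of_adj_right (hp_adj v₁ ‹_›) (h ▸ hp_adj v₂ ‹_›),
    hp_mem, fun v hv => (hp_adj v hv).adj_sub⟩

lemma ncard_add_ncard_compl_le_of_injOn_adj [Finite V] {A : Set V} {p : V → V}
    (hinj : Set.InjOn p Aᶜ) (hmaps : Set.MapsTo p Aᶜ A) (hadj : ∀ v ∉ A, G.Adj v (p v))
    (S : Set V) : S.ncard + Aᶜ.ncard ≤ A.ncard + (nbhd G S).ncard := by
  have hS : (S \ A).ncard ≤ (nbhd G S ∩ A).ncard :=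
    Set.ncard_le_ncard_of_injOn p
      (fun v hv => ⟨⟨v, hv.1, (hadj v hv.2).symm⟩, hmaps hv.2⟩) (hinj.mono fun _ hv => hv.2)
  have hAc : (Aᶜ \ nbhd G S).ncard ≤ (A \ S).ncard :=
    Set.ncard_le_ncard_of_injOn p
      (fun v hv => ⟨hmaps hv.1, fun hpS => hv.2 ⟨p v, hpS, hadj v hv.1⟩⟩)
      (hinj.mono fun _ hv => hv.1)
  have hN : Aᶜ ∩ nbhd G S = nbhd G S \ A := Set.inter_comm _ _
  have hS_split := Set.ncard_inter_add_ncard_sdiff_eq_ncard S A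
  have hA_split := Set.ncard_inter_add_ncard_sdiff_eq_ncard A S
  have hN_split := Set.ncard_inter_add_ncard_sdiff_eq_ncard (nbhd G S) A
  have hAc_split := Set.ncard_inter_add_ncard_sdiff_eq_ncard Aᶜ (nbhd G S)
  rw [Set.inter_comm A S] at hA_split
  rw [hN] at hAc_split
  omega

end Lemmas

/-- If `G` is a finite König–Egerváry graph, then `d(G) = α(G) - μ(G)`. -/
theorem critDiff_eq_indepNum_sub_matchNum [Finite V] (G : SimpleGraph V)
    (hG : KoenigEgervary G) :
    critDiff G = (indepNum G : ℤ) - (matchNum G : ℤ) := by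
  obtain ⟨A, hA⟩ := exists_isMaxIndep G
  have hAc := hG.ncard_compl hA
  apply le_antisymm
  · obtain ⟨S, -, hcrit⟩ := exists_isCritIndep G
    obtain ⟨p, hinj, hmaps, hadj⟩ := hG.exists_injOn_adj hA
    have := ncard_add_ncard_compl_le_of_injOn_adj hinj hmaps hadj S
    rw [hA.2, hAc] at this
    omega
  · have hN : (nbhd G A).ncard ≤ matchNum G :=
      hAc ▸ Set.ncard_le_ncard hA.1.nbhd_subset_compl
    have := hA.1.ncard_sub_ncard_nbhd_le_critDiff
    rw [hA.2] at this
    omega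

end KEPaper
end

section
/- If G is a finite König–Egerváry graph, then N(core(G)) equals the intersection of the complements V(G) − S taken over all maximum independent sets S of G. -/
namespace KEPaper

open SimpleGraph

variable {V : Type*}

/-! Fix a maximum matching `M`. For a maximum independent set `S` of a König–Egerváry graph,
`|V ∖ S| = μ(G) = |M|`; every edge of `M` has an endpoint outside `S` and the edges of `M` are
disjoint, so counting shows that `M` matches every vertex outside `S` to a vertex of `S`. A vertex
`v` lying outside every maximum independent set therefore has its `M`-partner in all of them,
that is, in the core. -/

theorem _root_.SimpleGraph.Subgraph.IsMatching.eq_of_mem_of_mem {G : SimpleGraph V}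
    {M : G.Subgraph} (hM : M.IsMatching) {e₁ e₂ : Sym2 V} (he₁ : e₁ ∈ M.edgeSet)
    (he₂ : e₂ ∈ M.edgeSet) {v : V} (hv₁ : v ∈ e₁) (hv₂ : v ∈ e₂) : e₁ = e₂ := by
  obtain ⟨w₁, rfl⟩ := Sym2.mem_iff_exists.mp hv₁
  obtain ⟨w₂, rfl⟩ := Sym2.mem_iff_exists.mp hv₂
  rw [Subgraph.mem_edgeSet] at he₁ he₂
  rw [hM.eq_of_adj_left he₁ he₂]

/-- Injecting the edges of `M` into `T` by an endpoint in `T` is forced to be a bijection, so each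
`v ∈ T` is the chosen endpoint of an edge whose other endpoint cannot be chosen as well. -/
theorem _root_.SimpleGraph.Subgraph.IsMatching.exists_adj_notMem_of_ncard_le
    {G : SimpleGraph V} {M : G.Subgraph} (hM : M.IsMatching) {T : Set V} (hT : T.Finite)
    (hcover : ∀ e ∈ M.edgeSet, ∃ x ∈ e, x ∈ T) (hcard : T.ncard ≤ M.edgeSet.ncard)
    {v : V} (hv : v ∈ T) : ∃ w ∉ T, M.Adj v w := by
  have hpick (e : M.edgeSet) : ∃ x : T, (x : V) ∈ (e : Sym2 V) := by
    obtain ⟨x, hxe, hxT⟩ := hcover e e.2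
    exact ⟨⟨x, hxT⟩, hxe⟩
  choose f hf using hpick
  have : Finite T := hT.to_subtype
  have hinj : Function.Injective f := fun e₁ e₂ h =>
    Subtype.ext (hM.eq_of_mem_of_mem e₁.2 e₂.2 (hf e₁) (h ▸ hf e₂))
  have hsurj : Function.Surjective f :=
    (hinj.bijective_of_nat_card_le hcard).2
  obtain ⟨e, he⟩ := hsurj ⟨v, hv⟩
  obtain ⟨w, hew⟩ := Sym2.mem_iff_exists.mp (he ▸ hf e)
  have hvw : M.Adj v w := by rw [← Subgraph.mem_edgeSet, ← hew]; exact e.2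
  refine ⟨w, fun hw => ?_, hvw⟩
  obtain ⟨e', he'⟩ := hsurj ⟨w, hw⟩
  have hee' : e' = e :=
    Subtype.ext (hM.eq_of_mem_of_mem e'.2 e.2 (he' ▸ hf e') (hew ▸ Sym2.mem_mk_right _ w))
  exact hvw.ne (congrArg Subtype.val (he.symm.trans (hee' ▸ he')))

theorem IsIndep.exists_notMem_of_mem_edgeSet {G : SimpleGraph V} {S : Set V}
    (hS : IsIndep G S) {e : Sym2 V} (he : e ∈ G.edgeSet) : ∃ x ∈ e, x ∉ S := by
  induction e with
  | _ a b =>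
    by_contra! h
    exact hS (h a (Sym2.mem_mk_left a b)) (h b (Sym2.mem_mk_right a b)) he.ne he

theorem exists_isMaxIndep_s12 [Finite V] (G : SimpleGraph V) : ∃ S, IsMaxIndep G S := by
  obtain ⟨S, hS, hcard⟩ : indepNum G ∈ {n | ∃ S : Set V, IsIndep G S ∧ S.ncard = n} :=
    Nat.sSup_mem ⟨0, ∅, Set.pairwise_empty _, Set.ncard_empty V⟩
      ⟨Nat.card V, by rintro n ⟨S, -, rfl⟩; exact Set.ncard_le_card S⟩
  exact ⟨S, hS, hcard⟩

theorem exists_isMatching_ncard_edgeSet_eq_matchNum [Finite V] (G : SimpleGraph V) :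
    ∃ M : G.Subgraph, M.IsMatching ∧ M.edgeSet.ncard = matchNum G :=
  Nat.sSup_mem (s := {n | ∃ M : G.Subgraph, M.IsMatching ∧ M.edgeSet.ncard = n}) ⟨0, ⊥, fun _ hv => hv.elim, by simp⟩
    ⟨Nat.card (Sym2 V), by rintro n ⟨M, -, rfl⟩; exact Set.ncard_le_card _⟩

theorem KoenigEgervary.ncard_compl_eq_matchNum [Finite V] {G : SimpleGraph V}
    (hG : KoenigEgervary G) {S : Set V} (hS : IsMaxIndep G S) : Sᶜ.ncard = matchNum G := by
  have := Set.ncard_add_ncard_compl S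
  rw [hS.2, hG] at this
  omega

theorem KoenigEgervary.exists_adj_mem_of_notMem [Finite V] {G : SimpleGraph V}
    (hG : KoenigEgervary G) {M : G.Subgraph} (hM : M.IsMatching)
    (hMc : M.edgeSet.ncard = matchNum G) {S : Set V} (hS : IsMaxIndep G S) {v : V}
    (hv : v ∉ S) : ∃ w ∈ S, M.Adj v w := by
  obtain ⟨w, hw, hvw⟩ := hM.exists_adj_notMem_of_ncard_le Sᶜ.toFinite
    (fun _ he => hS.1.exists_notMem_of_mem_edgeSet (M.edgeSet_subset he))
    (by rw [hG.ncard_compl_eq_matchNum hS, hMc]) hv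
  exact ⟨w, not_not.mp hw, hvw⟩

/-- If `G` is a finite König–Egerváry graph, then `N(core(G))` equals the
intersection of the complements `V(G) - S` over all maximum independent sets `S`. -/
theorem nbhd_core_eq_iInter_compl [Finite V] (G : SimpleGraph V)
    (hG : KoenigEgervary G) :
    nbhd G (core G) = ⋂ S ∈ {S : Set V | IsMaxIndep G S}, Sᶜ := by
  ext v
  simp only [Set.mem_iInter, Set.mem_ofPred_eq, Set.mem_compl_iff]
  constructor
  · rintro ⟨w, hw, hvw⟩ S hS hvS
    exact hS.1 hvS (Set.mem_iInter₂.mp hw S hS) hvw.ne hvw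
  · intro hv
    obtain ⟨S₀, hS₀⟩ := exists_isMaxIndep_s12 G
    obtain ⟨M, hM, hMc⟩ := exists_isMatching_ncard_edgeSet_eq_matchNum G
    obtain ⟨w, -, hvw⟩ := hG.exists_adj_mem_of_notMem hM hMc hS₀ (hv S₀ hS₀)
    refine ⟨w, Set.mem_iInter₂.mpr fun S hS => ?_, M.adj_sub hvw⟩
    obtain ⟨w', hw', hvw'⟩ := hG.exists_adj_mem_of_notMem hM hMc hS (hv S hS)
    rwa [hM.eq_of_adj_left hvw hvw']

end KEPaper
end
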